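/- (Scaling relation for the Gamma likelihood, second natural parameter.) Define ℓ(x, η₁, η₂) := η₁·Real.log x + η₂·x − Real.log (Real.Gamma (η₁+1)) + (η₁+1)·Real.log(−η₂). Then for every x > 0, η₁ > −1, η₂ < 0, ω > 0, and every natural number j ≥ 1, the j-th derivative of the function t ↦ ℓ(ω·x, η₁, t) at the point η₂/ω equals ω^j times the j-th derivative of the function t ↦ ℓ(x, η₁, t) at the point η₂. -/

import Mathlib

/-!
Rescaling `η₂ ↦ η₂ / ω` only shifts `t ↦ ℓ(ωx, η₁, t)` by a constant: since `t · ωx = (ωt) · x` and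
`log (-t) = log (-ωt) - log ω`, it agrees with `t ↦ ℓ(x, η₁, ωt)` up to an additive constant away
from `t = 0`. Constants die under derivatives of order `j ≥ 1`, and by the chain rule each
derivative of `t ↦ g (ω t)` brings out one factor `ω`.
-/

open Filter Topology

noncomputable def gammaLogLik (x η₁ η₂ : ℝ) : ℝ :=
  η₁ * Real.log x + η₂ * x - Real.log (Real.Gamma (η₁ + 1)) + (η₁ + 1) * Real.log (-η₂)

-- Unlike `iteratedDeriv_comp_const_mul`, no smoothness of `f` is needed, since
-- `deriv_comp_mul_left` holds unconditionally.
theorem iteratedDeriv_comp_mul_left {𝕜 E : Type*} [NontriviallyNormedField 𝕜]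
    [NormedAddCommGroup E] [NormedSpace 𝕜 E] (n : ℕ) (c : 𝕜) (f : 𝕜 → E) (x : 𝕜) :
    iteratedDeriv n (fun y => f (c * y)) x = c ^ n • iteratedDeriv n f (c * x) := by
  induction n generalizing x with
  | zero => simp
  | succ n ih =>
    rw [iteratedDeriv_succ, funext ih, deriv_fun_const_smul_field,
      deriv_comp_mul_left c (iteratedDeriv n f), smul_smul, ← pow_succ, iteratedDeriv_succ]

theorem gammaLogLik_mul_left {x η₁ ω t : ℝ} (hω : ω ≠ 0) (ht : t ≠ 0) :
    gammaLogLik (ω * x) η₁ t = gammaLogLik x η₁ (ω * t)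
      + (η₁ * (Real.log (ω * x) - Real.log x) - (η₁ + 1) * Real.log ω) := by
  have hlog : Real.log (-(ω * t)) = Real.log ω + Real.log (-t) := by
    rw [← mul_neg, Real.log_mul hω (neg_ne_zero.mpr ht)]
  simp only [gammaLogLik, hlog]
  ring

theorem gamma_scaling_second_natural_param_general
    (x η₁ η₂ ω : ℝ) (hη₂ : η₂ < 0) (hω : 0 < ω)
    (j : ℕ) (hj : 1 ≤ j) :
    iteratedDeriv j (fun t : ℝ => gammaLogLik (ω * x) η₁ t) (η₂ / ω) =
      ω ^ j * iteratedDeriv j (fun t : ℝ => gammaLogLik x η₁ t) η₂ := by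
  set C := η₁ * (Real.log (ω * x) - Real.log x) - (η₁ + 1) * Real.log ω
  have hlocal : (fun t => gammaLogLik (ω * x) η₁ t) =ᶠ[𝓝 (η₂ / ω)]
      fun t => C + gammaLogLik x η₁ (ω * t) := by
    filter_upwards [isOpen_ne.mem_nhds (div_neg_of_neg_of_pos hη₂ hω).ne] with t ht
    rw [gammaLogLik_mul_left hω.ne' ht, add_comm]
  rw [hlocal.iteratedDeriv_eq, iteratedDeriv_const_add hj, iteratedDeriv_comp_mul_left,
    mul_div_cancel₀ _ hω.ne', smul_eq_mul]

/-- (Scaling relation for the Gamma likelihood, second natural parameter.)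
For `j ≥ 1`, the `j`-th derivative in `η̃₂ = η₂/ω` of the scaled log-likelihood equals
`ω^j` times the `j`-th derivative in `η₂` of the original log-likelihood. -/
theorem gamma_scaling_second_natural_param
    (x η₁ η₂ ω : ℝ) (hx : 0 < x) (hη₁ : -1 < η₁) (hη₂ : η₂ < 0) (hω : 0 < ω)
    (j : ℕ) (hj : 1 ≤ j) :
    iteratedDeriv j (fun t : ℝ => gammaLogLik (ω * x) η₁ t) (η₂ / ω) =
      ω ^ j * iteratedDeriv j (fun t : ℝ => gammaLogLik x η₁ t) η₂ :=
  gamma_scaling_second_natural_param_general x η₁ η₂ ω hη₂ hω j hj
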